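/- arXiv:2403.08781 — 4 statements merged into one kernel-verified Lean document; each statement's English description precedes it below -/
import Mathlib

section
/- If both K1 and K2 are bounded-time completable with respect to (Lm, Lmi, N), then K1 ∪ K2 is bounded-time completable with respect to (Lm, Lmi, N). -/
open List

attribute [local instance] Classical.propDecidable

/-- Prefix closure of a language. -/
def pclosure {E : Type*} (K : Set (List E)) : Set (List E) := {s | ∃ t, s ++ t ∈ K}

/-- Set of minimal extensions of `s` into `Ki` (equals `{ε}` when `s ∈ Ki`). -/
noncomputable def Mset {E : Type*} (Ki : Set (List E)) (s : List E) : Set (List E) :=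
  if s ∈ Ki then {([] : List E)} else
    {t | s ++ t ∈ Ki ∧ ∀ t', t' <+: t → t' ≠ t → s ++ t' ∉ Ki}

/-- `K` is bounded-time completable w.r.t. `(Lmi, N)` (with `tick` the clock event). -/
def BTComp {E : Type*} [DecidableEq E] (tick : E) (Lmi : Set (List E)) (N : ℕ)
    (K : Set (List E)) : Prop :=
  ∀ s ∈ pclosure K,
    (Mset (K ∩ Lmi) s).Nonempty ∧ ∀ t ∈ Mset (K ∩ Lmi) s, t.count tick ≤ N

/-- Every extension of `s` into `A` has a prefix that is a minimal extension into `A`. -/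
lemma exists_min_prefix {E : Type*} (A : Set (List E)) (s : List E) :
    ∀ (t : List E), s ++ t ∈ A →
      ∃ u, u <+: t ∧ s ++ u ∈ A ∧ ∀ v, v <+: u → v ≠ u → s ++ v ∉ A := by
  have H : ∀ (n : ℕ) (t : List E), t.length ≤ n → s ++ t ∈ A →
      ∃ u, u <+: t ∧ s ++ u ∈ A ∧ ∀ v, v <+: u → v ≠ u → s ++ v ∉ A := by
    intro n
    induction n with
    | zero =>
      intro t ht hA
      refine ⟨t, prefix_refl _, hA, fun v hv hne hvA => hne ?_⟩
      have : t = [] := List.length_eq_zero_iff.mp (Nat.le_zero.mp ht)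
      subst this
      exact List.prefix_nil.mp hv
    | succ n ih =>
      intro t ht hA
      by_cases hc : ∃ v, v <+: t ∧ v ≠ t ∧ s ++ v ∈ A
      · obtain ⟨v, hv, hne, hvA⟩ := hc
        have hlt : v.length < t.length :=
          lt_of_le_of_ne hv.length_le (fun h => hne (hv.eq_of_length h))
        obtain ⟨u, hu, h1, h2⟩ := ih v (by omega) hvA
        exact ⟨u, hu.trans hv, h1, h2⟩
      · exact ⟨t, prefix_refl _, hA, fun v hv hne hvA => hc ⟨v, hv, hne, hvA⟩⟩
  exact fun t => H t.length t le_rfl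

lemma aux_ne {E : Type*} [DecidableEq E] {tick : E} {Lmi : Set (List E)} {N : ℕ}
    {A : Set (List E)} (C : Set (List E)) (hb : BTComp tick Lmi N A)
    (hAC : A ∩ Lmi ⊆ C) {s : List E} (hs : s ∈ pclosure A) (hmem : s ∉ C) :
    (Mset C s).Nonempty := by
  obtain ⟨t, htM⟩ := (hb s hs).1
  have hsA : s ∉ A ∩ Lmi := fun h => hmem (hAC h)
  rw [Mset, if_neg hsA] at htM
  have htC : s ++ t ∈ C := hAC htM.1
  obtain ⟨u, hu, huC, humin⟩ := exists_min_prefix C s t htC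
  exact ⟨u, by rw [Mset, if_neg hmem]; exact ⟨huC, humin⟩⟩

lemma aux_le {E : Type*} [DecidableEq E] {tick : E} {Lmi : Set (List E)} {N : ℕ}
    {A : Set (List E)} (C : Set (List E)) (hb : BTComp tick Lmi N A)
    (hAC : A ∩ Lmi ⊆ C) {s t : List E} (htA : s ++ t ∈ A ∩ Lmi)
    (hmin : ∀ t', t' <+: t → t' ≠ t → s ++ t' ∉ C) : t.count tick ≤ N := by
  by_cases h0 : t = []
  · subst h0; simp
  · have hsA : s ∉ A ∩ Lmi := by
      intro h
      exact hmin [] nil_prefix (fun h' => h0 h'.symm) (by simpa using hAC h)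
    have hsp : s ∈ pclosure A := ⟨t, htA.1⟩
    refine (hb s hsp).2 t ?_
    rw [Mset, if_neg hsA]
    exact ⟨htA, fun t' ht' hne hmem' => hmin t' ht' hne (hAC hmem')⟩

theorem btcomp_union {E : Type*} [DecidableEq E] (tick : E) (Lm Lmi : Set (List E))
    (hLmi : Lmi ⊆ Lm) (N : ℕ) (hN : 0 < N) (K1 K2 : Set (List E))
    (hK1 : K1 ⊆ Lm) (hK2 : K2 ⊆ Lm)
    (hb1 : BTComp tick Lmi N K1) (hb2 : BTComp tick Lmi N K2) :
    BTComp tick Lmi N (K1 ∪ K2) := by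
  intro s hs
  set C : Set (List E) := (K1 ∪ K2) ∩ Lmi with hC
  have hAC1 : K1 ∩ Lmi ⊆ C := fun x hx => ⟨Or.inl hx.1, hx.2⟩
  have hAC2 : K2 ∩ Lmi ⊆ C := fun x hx => ⟨Or.inr hx.1, hx.2⟩
  by_cases hmem : s ∈ C
  · constructor
    · exact ⟨[], by rw [Mset, if_pos hmem]; rfl⟩
    · intro t ht
      rw [Mset, if_pos hmem] at ht
      simp only [Set.mem_singleton_iff] at ht
      subst ht; simp
  · constructor
    · obtain ⟨t, ht⟩ := hs
      rcases ht with h | h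
      · exact aux_ne C hb1 hAC1 ⟨t, h⟩ hmem
      · exact aux_ne C hb2 hAC2 ⟨t, h⟩ hmem
    · intro t ht
      rw [Mset, if_neg hmem] at ht
      obtain ⟨⟨h12, hL⟩, hmin⟩ := ht
      rcases h12 with h | h
      · exact aux_le C hb1 hAC1 ⟨h, hL⟩ hmin
      · exact aux_le C hb2 hAC2 ⟨h, hL⟩ hmin
end

section
/- Bounded-time completability is closed under arbitrary unions: if {K_j}_{j∈J} is a family of languages each bounded-time completable with respect to (Lm, Lmi, N), then ⋃_{j∈J} K_j is bounded-time completable with respect to (Lm, Lmi, N). -/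
open List

attribute [local instance] Classical.propDecidable

theorem btcomp_iUnion {E : Type*} [DecidableEq E] (tick : E) (Lm Lmi : Set (List E))
    (hLmi : Lmi ⊆ Lm) (N : ℕ) (hN : 0 < N) (J : Type*) (K : J → Set (List E))
    (hK : ∀ j, K j ⊆ Lm) (hb : ∀ j, BTComp tick Lmi N (K j)) :
    BTComp tick Lmi N (⋃ j, K j) := by
  intro s hs
  set U : Set (List E) := (⋃ j, K j) ∩ Lmi with hU
  by_cases hsU : s ∈ U
  · constructor
    · exact ⟨[], by simp [Mset, hsU]⟩
    · intro t ht
      simp only [Mset, if_pos hsU, Set.mem_singleton_iff] at ht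
      subst ht; simp [hN.le]
  · -- s ∉ U
    obtain ⟨u, j, hj⟩ : ∃ u, ∃ j, s ++ u ∈ K j := by
      obtain ⟨u, hu⟩ := hs
      simp only [Set.mem_iUnion] at hu
      exact ⟨u, hu⟩
    have hsj : s ∈ pclosure (K j) := ⟨u, hj⟩
    obtain ⟨⟨t, ht⟩, hbd⟩ := hb j s hsj
    have hsKj : s ∉ K j ∩ Lmi := fun h => hsU ⟨Set.mem_iUnion.2 ⟨j, h.1⟩, h.2⟩
    simp only [Mset, if_neg hsKj, Set.mem_setOf_eq] at ht
    have htU : s ++ t ∈ U := ⟨Set.mem_iUnion.2 ⟨j, ht.1.1⟩, ht.1.2⟩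
    -- pick a prefix of t of minimal length landing in U
    have hPne : ∃ n, ∃ t', t'.length = n ∧ t' <+: t ∧ s ++ t' ∈ U :=
      ⟨t.length, t, rfl, prefix_rfl, htU⟩
    classical
    obtain ⟨t0, ht0len, ht0pre, ht0U⟩ := Nat.find_spec hPne
    have hmin : ∀ t', t' <+: t0 → t' ≠ t0 → s ++ t' ∉ U := by
      intro t' hpre hne hmem
      have hlt : t'.length < t0.length := by
        rcases lt_or_eq_of_le hpre.length_le with h | h
        · exact h
        · exact absurd (hpre.eq_of_length h) hne
      have : t'.length < Nat.find hPne := ht0len ▸ hlt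
      exact Nat.find_min hPne this ⟨t', rfl, hpre.trans ht0pre, hmem⟩
    have ht0M : t0 ∈ Mset U s := by
      simp only [Mset, if_neg hsU, Set.mem_setOf_eq]
      exact ⟨ht0U, hmin⟩
    refine ⟨⟨t0, ht0M⟩, ?_⟩
    intro v hv
    simp only [Mset, if_neg hsU, Set.mem_setOf_eq] at hv
    obtain ⟨⟨hvK, hvL⟩, hvmin⟩ := hv
    obtain ⟨j', hj'⟩ := Set.mem_iUnion.1 hvK
    have hsj' : s ∈ pclosure (K j') := ⟨v, hj'⟩
    have hsKj' : s ∉ K j' ∩ Lmi := fun h => hsU ⟨Set.mem_iUnion.2 ⟨j', h.1⟩, h.2⟩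
    have hvM : v ∈ Mset (K j' ∩ Lmi) s := by
      simp only [Mset, if_neg hsKj', Set.mem_setOf_eq]
      refine ⟨⟨hj', hvL⟩, fun t' hpre hne hmem => ?_⟩
      exact hvmin t' hpre hne ⟨Set.mem_iUnion.2 ⟨j', hmem.1⟩, hmem.2⟩
    exact (hb j' s hsj').2 v hvM
end

section
/- Controllability of timed languages is closed under union: if K1 and K2 are both controllable with respect to (L, Σ_uc, Σ_for, tick), then K1 ∪ K2 is controllable with respect to (L, Σ_uc, Σ_for, tick). -/
open List

attribute [local instance] Classical.propDecidable

/-- Eligible events of language `K` after string `s`. -/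
def Elig {E : Type*} (K : Set (List E)) (s : List E) : Set E :=
  {σ | s ++ [σ] ∈ pclosure K}

/-- TDES controllability of `K` w.r.t. plant behavior `L`, uncontrollable events `Suc`,
forcible events `Sfor` and the event `tick`. -/
def TControllable {E : Type*} (L : Set (List E)) (Suc Sfor : Set E) (tick : E)
    (K : Set (List E)) : Prop :=
  ∀ s ∈ pclosure K,
    (Elig K s ∩ Sfor = ∅ → {σ | s ++ [σ] ∈ L} ∩ (Suc ∪ {tick}) ⊆ Elig K s) ∧
    (Elig K s ∩ Sfor ≠ ∅ → {σ | s ++ [σ] ∈ L} ∩ Suc ⊆ Elig K s)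

theorem tcontrollable_union {E : Type*} (L : Set (List E)) (Suc Sfor : Set E) (tick : E)
    (hL : ∀ s t : List E, s ++ t ∈ L → s ∈ L) (htick : tick ∉ Suc)
    (K1 K2 : Set (List E))
    (h1 : TControllable L Suc Sfor tick K1) (h2 : TControllable L Suc Sfor tick K2) :
    TControllable L Suc Sfor tick (K1 ∪ K2) := by
  have hpc : pclosure (K1 ∪ K2) = pclosure K1 ∪ pclosure K2 := by
    ext s; constructor
    · rintro ⟨t, ht | ht⟩
      · exact Or.inl ⟨t, ht⟩
      · exact Or.inr ⟨t, ht⟩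
    · rintro (⟨t, ht⟩ | ⟨t, ht⟩)
      · exact ⟨t, Or.inl ht⟩
      · exact ⟨t, Or.inr ht⟩
  have hel : ∀ s, Elig (K1 ∪ K2) s = Elig K1 s ∪ Elig K2 s := by
    intro s; simp only [Elig, hpc]; rfl
  intro s hs
  rw [hpc] at hs
  constructor
  · intro hemp σ hσ
    rw [hel]
    rw [hel] at hemp
    have he1 : Elig K1 s ∩ Sfor = ∅ := by
      ext x; simp only [Set.mem_empty_iff_false, iff_false]
      intro hx
      have : x ∈ (Elig K1 s ∪ Elig K2 s) ∩ Sfor := ⟨Or.inl hx.1, hx.2⟩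
      rw [hemp] at this; exact this
    have he2 : Elig K2 s ∩ Sfor = ∅ := by
      ext x; simp only [Set.mem_empty_iff_false, iff_false]
      intro hx
      have : x ∈ (Elig K1 s ∪ Elig K2 s) ∩ Sfor := ⟨Or.inr hx.1, hx.2⟩
      rw [hemp] at this; exact this
    rcases hs with hs | hs
    · exact Or.inl ((h1 s hs).1 he1 hσ)
    · exact Or.inr ((h2 s hs).1 he2 hσ)
  · intro hne σ hσ
    rw [hel]
    rw [hel] at hne
    rcases Set.nonempty_iff_ne_empty.mpr hne with ⟨f, hf1 | hf1, hf2⟩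
    · -- forcible in K1, so s ∈ pclosure K1
      have hs1 : s ∈ pclosure K1 := by
        rcases hf1 with ⟨t, ht⟩; exact ⟨[f] ++ t, by rwa [List.append_assoc] at ht⟩
      exact Or.inl ((h1 s hs1).2 (Set.nonempty_iff_ne_empty.mp ⟨f, hf1, hf2⟩) hσ)
    · have hs2 : s ∈ pclosure K2 := by
        rcases hf1 with ⟨t, ht⟩; exact ⟨[f] ++ t, by rwa [List.append_assoc] at ht⟩
      exact Or.inr ((h2 s hs2).2 (Set.nonempty_iff_ne_empty.mp ⟨f, hf1, hf2⟩) hσ)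
end

section
/- If a finite-state tick-automaton G with state set Q, marker states Qm, and cover {Q_{m,i} | i ∈ I} of Qm is bounded-time nonblocking with respect to {(Q_{m,i}, N_i) | i ∈ I}, then Lm(G) is bounded-time completable with respect to {(Lm(G), L_{m,i}(G), N_i) | i ∈ I}, where L_{m,i}(G) := {s ∈ Lm(G) | δ(q0, s) ∈ Q_{m,i}}. -/
open List

attribute [local instance] Classical.propDecidable

/-- Extension of a partial transition function to strings. -/
def runA {Q E : Type*} (δ : Q → E → Option Q) : Q → List E → Option Q
  | q, [] => some q
  | q, σ :: s => (δ q σ).bind fun q' => runA δ q' s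

/-- Closed behavior of the automaton. -/
def Lg {Q E : Type*} (δ : Q → E → Option Q) (q0 : Q) : Set (List E) :=
  {s | (runA δ q0 s).isSome}

/-- Marked behavior (w.r.t. a set of marker states `Qm`). -/
def Lmg {Q E : Type*} (δ : Q → E → Option Q) (q0 : Q) (Qm : Set Q) : Set (List E) :=
  {s | ∃ q, runA δ q0 s = some q ∧ q ∈ Qm}

/-- Strings leading state `q` to `Qmi` for the first time (equals `{ε}` if `q ∈ Qmi`). -/
noncomputable def Cset {Q E : Type*} (δ : Q → E → Option Q) (Qmi : Set Q) (q : Q) : Set (List E) :=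
  if q ∈ Qmi then {([] : List E)} else
    {s | (∃ q', runA δ q s = some q' ∧ q' ∈ Qmi) ∧
      ∀ s', s' <+: s → s' ≠ s → ¬ ∃ q', runA δ q s' = some q' ∧ q' ∈ Qmi}

/-- State `q` is `N`-tick coreachable w.r.t. `Qmi`. -/
def NTickCoreach {Q E : Type*} [DecidableEq E] (tick : E) (δ : Q → E → Option Q)
    (Qmi : Set Q) (N : ℕ) (q : Q) : Prop :=
  (Cset δ Qmi q).Nonempty ∧ ∀ s ∈ Cset δ Qmi q, s.count tick ≤ N

/-! Along a run `q0 —s→ q`, the minimal extensions of `s` into the `i`-th marked language are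
exactly the strings leading `q` to `Qmi i` for the first time. So `Mset (Lm ∩ Lm_i) s` is the set
`Cset δ (Qmi i) q`, whose nonemptiness and tick bound are the `Ni i`-tick coreachability of `q`. -/

section Run

variable {Q E : Type*} (δ : Q → E → Option Q)

theorem runA_append (q : Q) (s t : List E) :
    runA δ q (s ++ t) = (runA δ q s).bind fun q' => runA δ q' t := by
  induction s generalizing q with
  | nil => rfl
  | cons a s ih =>
    simp only [List.cons_append, runA]
    cases δ q a with
    | none => rfl
    | some q' => exact ih q'

theorem runA_append_of_runA_eq {q0 q : Q} {s : List E} (hs : runA δ q0 s = some q)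
    (u : List E) : runA δ q0 (s ++ u) = runA δ q u := by
  rw [runA_append, hs, Option.bind_some]

theorem append_mem_Lmg_iff {q0 q : Q} {s : List E} (hs : runA δ q0 s = some q) (Qm : Set Q)
    (u : List E) : s ++ u ∈ Lmg δ q0 Qm ↔ ∃ q', runA δ q u = some q' ∧ q' ∈ Qm := by
  simp only [Lmg, Set.mem_ofPred_eq, runA_append_of_runA_eq δ hs]

theorem append_mem_Lmg_inter_iff {q0 q : Q} {s : List E} (hs : runA δ q0 s = some q)
    {Qm Qmi : Set Q} (hsub : Qmi ⊆ Qm) (u : List E) :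
    s ++ u ∈ Lmg δ q0 Qm ∩ Lmg δ q0 Qmi ↔ ∃ q', runA δ q u = some q' ∧ q' ∈ Qmi := by
  rw [Set.mem_inter_iff, append_mem_Lmg_iff δ hs, append_mem_Lmg_iff δ hs]
  exact ⟨And.right, fun ⟨q', hq', hmem⟩ => ⟨⟨q', hq', hsub hmem⟩, q', hq', hmem⟩⟩

theorem Mset_eq_Cset {K : Set (List E)} {s : List E} {Qmi : Set Q} {q : Q}
    (hK : ∀ u, s ++ u ∈ K ↔ ∃ q', runA δ q u = some q' ∧ q' ∈ Qmi) :
    Mset K s = Cset δ Qmi q := by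
  have hs : s ∈ K ↔ q ∈ Qmi := by simpa [runA] using hK []
  unfold Mset Cset
  by_cases hq : q ∈ Qmi
  · rw [if_pos (hs.mpr hq), if_pos hq]
  · rw [if_neg (mt hs.mp hq), if_neg hq]
    ext u
    simp only [Set.mem_ofPred_eq, hK]

end Run

theorem btnonblocking_imp_btcomp_general {Q E : Type*} [DecidableEq E] (tick : E)
    (δ : Q → E → Option Q) (q0 : Q) (Qm : Set Q)
    (ι : Type*) (Qmi : ι → Set Q) (Ni : ι → ℕ)
    (hcov1 : ∀ i, Qmi i ⊆ Qm)
    (hbnb : ∀ (i : ι) (s : List E) (q : Q), runA δ q0 s = some q →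
      NTickCoreach tick δ (Qmi i) (Ni i) q) :
    ∀ i : ι, BTComp tick (Lmg δ q0 (Qmi i)) (Ni i) (Lmg δ q0 Qm) := by
  rintro i s ⟨t, qf, hrun, -⟩
  obtain ⟨q, hq, -⟩ := Option.bind_eq_some_iff.mp ((runA_append δ q0 s t).symm.trans hrun)
  rw [Mset_eq_Cset δ (append_mem_Lmg_inter_iff δ hq (hcov1 i))]
  exact hbnb i s q hq

theorem btnonblocking_imp_btcomp {Q E : Type*} [Finite Q] [DecidableEq E] (tick : E)
    (δ : Q → E → Option Q) (q0 : Q) (Qm : Set Q)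
    (ι : Type*) (Qmi : ι → Set Q) (Ni : ι → ℕ)
    (hNi : ∀ i, 0 < Ni i) (hne : ∀ i, (Qmi i).Nonempty)
    (hcov1 : ∀ i, Qmi i ⊆ Qm) (hcov2 : (⋃ i, Qmi i) = Qm)
    (hbnb : ∀ (i : ι) (s : List E) (q : Q), runA δ q0 s = some q →
      NTickCoreach tick δ (Qmi i) (Ni i) q) :
    ∀ i : ι, BTComp tick (Lmg δ q0 (Qmi i)) (Ni i) (Lmg δ q0 Qm) :=
  btnonblocking_imp_btcomp_general tick δ q0 Qm ι Qmi Ni hcov1 hbnb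
end
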